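/- (Van Loan's lemma, time-inhomogeneous version.) For continuous matrix functions A(x) (m×m), C(x) (n×n), and B(x) (m×n), the product integral of the block upper-triangular matrix [[A(x), B(x)],[0, C(x)]] from s to t equals the block matrix [[F_A(s,t), ∫_s^t F_A(s,u) B(u) F_C(u,t) du],[0, F_C(s,t)]], where F_A(s,t) = ∏_s^t (I + A(x) dx) and F_C(s,t) = ∏_s^t (I + C(x) dx). -/

import Mathlib

/-!
Both sides solve the forward equation `∂ₜ X s t = X s t * M t`, `X s s = 1`, for
`M = [[A, B], [0, C]]`, and a linear equation with continuous coefficients has at most one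
solution. On the right, the diagonal blocks solve their own equations; by the cocycle identity
`F_C u t = F_C u s * F_C s t` the corner equals `(∫ₛᵗ F_A s u * B u * F_C u s du) * F_C s t`,
and the product rule gives it the derivative `F_A s t * B t + corner * C t`
(variation of constants).
-/

open Matrix MeasureTheory

attribute [local instance] Matrix.linftyOpNormedAddCommGroup Matrix.linftyOpNormedSpace
  Matrix.linftyOpNormedRing Matrix.linftyOpNormedAlgebra

section NormedRing

variable {R : Type*} [NormedRing R] [NormedAlgebra ℝ R]

theorem eq_of_hasDerivAt_mul_right {M : ℝ → R} (hM : Continuous M) {f g : ℝ → R}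
    (hf : ∀ t, HasDerivAt f (f t * M t) t) (hg : ∀ t, HasDerivAt g (g t * M t) t)
    {t₀ : ℝ} (h₀ : f t₀ = g t₀) : f = g := by
  funext t
  obtain ⟨a, b, ht, ht₀⟩ : ∃ a b, t ∈ Set.Ioo a b ∧ t₀ ∈ Set.Ioo a b :=
    ⟨min t t₀ - 1, max t t₀ + 1, by grind⟩
  obtain ⟨L, hL⟩ := isCompact_Icc.exists_bound_of_continuousOn (hM.continuousOn (s := Set.Icc a b))
  have hLip : ∀ u ∈ Set.Ioo a b, LipschitzOnWith L.toNNReal (· * M u) Set.univ :=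
    fun u hu => LipschitzWith.lipschitzOnWith <| LipschitzWith.of_dist_le_mul fun x y => by
      rw [dist_eq_norm, dist_eq_norm, ← sub_mul, mul_comm]
      exact (norm_mul_le _ _).trans <| mul_le_mul_of_nonneg_left
        ((hL u (Set.Ioo_subset_Icc_self hu)).trans L.le_coe_toNNReal) (norm_nonneg _)
  exact ODE_solution_unique_of_mem_Ioo hLip ht₀ (fun u _ => ⟨hf u, trivial⟩)
    (fun u _ => ⟨hg u, trivial⟩) h₀ ht

structure IsProductIntegral (M : ℝ → R) (F : ℝ → ℝ → R) : Prop where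
  hasDerivAt : ∀ s t, HasDerivAt (F s) (F s t * M t) t
  self_eq_one : ∀ s, F s s = 1

namespace IsProductIntegral

variable {M : ℝ → R} {F : ℝ → ℝ → R}

theorem continuous (hF : IsProductIntegral M F) (s : ℝ) : Continuous (F s) :=
  continuous_iff_continuousAt.2 fun t => (hF.hasDerivAt s t).continuousAt

theorem mul_eq (hM : Continuous M) (hF : IsProductIntegral M F) (s r t : ℝ) :
    F s r * F r t = F s t := by
  have hf : ∀ t, HasDerivAt (fun t => F s r * F r t) (F s r * F r t * M t) t := fun t => by
    rw [mul_assoc]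
    exact (hF.hasDerivAt r t).const_mul (F s r)
  refine congrFun (eq_of_hasDerivAt_mul_right hM hf (hF.hasDerivAt s) (t₀ := r) ?_) t
  rw [hF.self_eq_one, mul_one]

theorem mul_swap_eq_one (hM : Continuous M) (hF : IsProductIntegral M F) (s t : ℝ) :
    F s t * F t s = 1 := by
  rw [hF.mul_eq hM, hF.self_eq_one]

theorem continuous_left [CompleteSpace R] (hM : Continuous M) (hF : IsProductIntegral M F)
    (t : ℝ) : Continuous fun s => F s t := by
  let U : ℝ → Rˣ := fun s => ⟨F t s, F s t, hF.mul_swap_eq_one hM t s, hF.mul_swap_eq_one hM s t⟩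
  have hU : ∀ s, F s t = Ring.inverse (F t s) := fun s => (Ring.inverse_unit (U s)).symm
  simp_rw [hU]
  exact continuous_iff_continuousAt.2 fun s =>
    (NormedRing.inverse_continuousAt (U s)).comp_of_eq (hF.continuous t).continuousAt rfl

end IsProductIntegral

end NormedRing

section Matrix

variable {l m n o : Type*} [Fintype l] [Fintype m] [Fintype n] [Fintype o]

-- The `linfty` norm induces the matrix topology only up to unfolding, so statements about
-- matrices are matched against bilinear-map lemmas by `exact`, not syntactically.

noncomputable def Matrix.mulCLM : Matrix l m ℝ →L[ℝ] Matrix m n ℝ →L[ℝ] Matrix l n ℝ :=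
  (mulLinearMap ℝ).mkContinuous₂ 1 fun X Y => by simpa using linfty_opNorm_mul X Y

theorem HasDerivAt.matrix_mul {f : ℝ → Matrix l m ℝ} {g : ℝ → Matrix m n ℝ}
    {f' : Matrix l m ℝ} {g' : Matrix m n ℝ} {x : ℝ}
    (hf : HasDerivAt f f' x) (hg : HasDerivAt g g' x) :
    HasDerivAt (fun t => f t * g t) (f' * g x + f x * g') x := by
  have h := mulCLM.hasDerivAt_of_bilinear (fun _ => hf) (fun _ => hg)
  rwa [add_comm] at h

theorem Continuous.intervalIntegral_matrix_mul_const {f : ℝ → Matrix l m ℝ} (hf : Continuous f)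
    (a b : ℝ) (X : Matrix m n ℝ) : ∫ x in a..b, f x * X = (∫ x in a..b, f x) * X := by
  have h := (mulCLM.flip X : Matrix l m ℝ →L[ℝ] Matrix l n ℝ).intervalIntegral_comp_comm
    (hf.intervalIntegrable (μ := volume) a b)
  exact h

noncomputable def Matrix.fromBlocksCLM :
    (Matrix n l ℝ × Matrix n m ℝ × Matrix o l ℝ × Matrix o m ℝ) →L[ℝ]
      Matrix (n ⊕ o) (l ⊕ m) ℝ :=
  LinearMap.toContinuousLinearMap
    { toFun := fun p => fromBlocks p.1 p.2.1 p.2.2.1 p.2.2.2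
      map_add' := fun _ _ => (fromBlocks_add ..).symm
      map_smul' := fun _ _ => (fromBlocks_smul ..).symm }

theorem HasDerivAt.matrix_fromBlocks {a : ℝ → Matrix n l ℝ} {b : ℝ → Matrix n m ℝ}
    {c : ℝ → Matrix o l ℝ} {d : ℝ → Matrix o m ℝ} {a' : Matrix n l ℝ} {b' : Matrix n m ℝ}
    {c' : Matrix o l ℝ} {d' : Matrix o m ℝ} {x : ℝ}
    (ha : HasDerivAt a a' x) (hb : HasDerivAt b b' x) (hc : HasDerivAt c c' x)
    (hd : HasDerivAt d d' x) :
    HasDerivAt (fun t => fromBlocks (a t) (b t) (c t) (d t)) (fromBlocks a' b' c' d') x := by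
  have h := fromBlocksCLM.hasFDerivAt.comp_hasDerivAt x (ha.prodMk (hb.prodMk (hc.prodMk hd)))
  exact h

theorem IsProductIntegral.hasDerivAt_integral_mul [DecidableEq n] {C : ℝ → Matrix n n ℝ}
    {F : ℝ → ℝ → Matrix n n ℝ} (hC : Continuous C) (hF : IsProductIntegral C F)
    {h : ℝ → Matrix m n ℝ} (hh : Continuous h) (s t : ℝ) :
    HasDerivAt (fun t => ∫ u in s..t, h u * F u t)
      (h t + (∫ u in s..t, h u * F u t) * C t) t := by
  have hint : Continuous fun u => h u * F u s := hh.matrix_mul (hF.continuous_left hC s)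
  have hsplit : ∀ t, ∫ u in s..t, h u * F u t = (∫ u in s..t, h u * F u s) * F s t := fun t => by
    rw [← hint.intervalIntegral_matrix_mul_const]
    congr 1 with u
    rw [Matrix.mul_assoc, hF.mul_eq hC]
  -- Instance search does not see through `Matrix` to the metrizable product topology.
  have : TopologicalSpace.PseudoMetrizableSpace (Matrix m n ℝ) :=
    inferInstanceAs (TopologicalSpace.PseudoMetrizableSpace (m → n → ℝ))
  have hJ : HasDerivAt (fun t => ∫ u in s..t, h u * F u s) (h t * F t s) t :=
    intervalIntegral.integral_hasDerivAt_right (hint.intervalIntegrable s t)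
      hint.aestronglyMeasurable.stronglyMeasurableAtFilter hint.continuousAt
  simp only [hsplit]
  convert hJ.matrix_mul (hF.hasDerivAt s t) using 1
  rw [Matrix.mul_assoc (h t), hF.mul_swap_eq_one hC, Matrix.mul_one, Matrix.mul_assoc]

end Matrix

/-- **Van Loan's lemma, time-inhomogeneous version.** For continuous matrix
functions `A` (`m × m`), `C` (`n × n`) and `B` (`m × n`), the product integral of the block
upper-triangular matrix `[[A x, B x], [0, C x]]` from `s` to `t` equals
`[[F_A (s,t), ∫_s^t F_A (s,u) * B u * F_C (u,t) du], [0, F_C (s,t)]]`, where `F_A`, `F_C`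
are the product integrals of `A` and `C` (solutions of the forward equation with initial
value `1`). -/
theorem productIntegral_fromBlocks {m n : ℕ}
    (A : ℝ → Matrix (Fin m) (Fin m) ℝ) (B : ℝ → Matrix (Fin m) (Fin n) ℝ)
    (C : ℝ → Matrix (Fin n) (Fin n) ℝ)
    (hA : Continuous A) (hB : Continuous B) (hC : Continuous C)
    (FA : ℝ → ℝ → Matrix (Fin m) (Fin m) ℝ) (FC : ℝ → ℝ → Matrix (Fin n) (Fin n) ℝ)
    (hFA : ∀ s t : ℝ, HasDerivAt (fun u => FA s u) (FA s t * A t) t)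
    (hFA0 : ∀ s : ℝ, FA s s = 1)
    (hFC : ∀ s t : ℝ, HasDerivAt (fun u => FC s u) (FC s t * C t) t)
    (hFC0 : ∀ s : ℝ, FC s s = 1)
    (G : ℝ → ℝ → Matrix (Fin m ⊕ Fin n) (Fin m ⊕ Fin n) ℝ)
    (hG : ∀ s t : ℝ,
      HasDerivAt (fun u => G s u) (G s t * Matrix.fromBlocks (A t) (B t) 0 (C t)) t)
    (hG0 : ∀ s : ℝ, G s s = 1) :
    ∀ s t : ℝ,
      G s t = Matrix.fromBlocks (FA s t)
        (∫ u in s..t, FA s u * B u * FC u t) 0 (FC s t) := by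
  intro s t
  have hPA : IsProductIntegral A FA := ⟨hFA, hFA0⟩
  have hPC : IsProductIntegral C FC := ⟨hFC, hFC0⟩
  set Q : ℝ → Matrix (Fin m) (Fin n) ℝ := fun t => ∫ u in s..t, FA s u * B u * FC u t
  have hQ : ∀ t, HasDerivAt Q (FA s t * B t + Q t * C t) t :=
    hPC.hasDerivAt_integral_mul hC ((hPA.continuous s).matrix_mul hB) s
  have hK : ∀ t, HasDerivAt (fun t => fromBlocks (FA s t) (Q t) 0 (FC s t))
      (fromBlocks (FA s t) (Q t) 0 (FC s t) * fromBlocks (A t) (B t) 0 (C t)) t := fun t => by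
    rw [fromBlocks_multiply]
    simp only [Matrix.mul_zero, Matrix.zero_mul, add_zero, zero_add]
    exact (hPA.hasDerivAt s t).matrix_fromBlocks (hQ t) (hasDerivAt_const t 0)
      (hPC.hasDerivAt s t)
  have hK₀ : G s s = fromBlocks (FA s s) (Q s) 0 (FC s s) := by
    simp [Q, hFA0, hFC0, hG0]
  exact congrFun (eq_of_hasDerivAt_mul_right (hA.matrix_fromBlocks hB continuous_const hC)
    (hG s) hK hK₀) t
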